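/- If x and y are nondegenerate simplices of a simplicial set X (possibly of different dimensions), and Sx = Ty where S and T are compositions of degeneracy operators, then x = y. -/

import Mathlib

open CategoryTheory Simplicial Opposite

/-- A simplex of a simplicial set is degenerate if it is of the form `s_i y` for some
degeneracy map `s_i`. -/
def SSet.IsDegenerate (X : SSet) : ∀ {n : ℕ}, X.obj (op (SimplexCategory.mk n)) → Prop :=
  fun {n} x => match n, x with
  | 0, _ => False
  | _ + 1, x => ∃ i y, x = SimplicialObject.σ X i y

namespace SSet

lemma isDegenerate_iff_mem_degenerate (X : SSet) {n : ℕ} (x : X _⦋n⦌) :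
    X.IsDegenerate x ↔ x ∈ X.degenerate n := by
  cases n with
  | zero => simp [IsDegenerate]
  | succ n => simp [IsDegenerate, degenerate_eq_iUnion_range_σ, eq_comm]

lemma mem_nonDegenerate_of_not_isDegenerate (X : SSet) {n : ℕ} {x : X _⦋n⦌}
    (hx : ¬ X.IsDegenerate x) : x ∈ X.nonDegenerate n :=
  (not_congr (X.isDegenerate_iff_mem_degenerate x)).1 hx

end SSet

/-- If `x` and `y` are nondegenerate simplices of a simplicial set `X` (possibly of different
dimensions) and `S x = T y` for compositions `S`, `T` of degeneracy operators (i.e. `X` applied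
to surjections of the simplex category), then `x = y` (in particular the dimensions agree). -/
theorem nondegenerate_eq_of_degeneracies_eq (X : SSet) {m m' N : ℕ}
    (x : X.obj (op (SimplexCategory.mk m))) (y : X.obj (op (SimplexCategory.mk m')))
    (hx : ¬ X.IsDegenerate x) (hy : ¬ X.IsDegenerate y)
    (g : SimplexCategory.mk N ⟶ SimplexCategory.mk m)
    (h : SimplexCategory.mk N ⟶ SimplexCategory.mk m')
    (hg : Function.Surjective g.toOrderHom) (hh : Function.Surjective h.toOrderHom)
    (e : X.map g.op x = X.map h.op y) :
    m = m' ∧ HEq x y := by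
  have : Epi g := SimplexCategory.epi_iff_surjective.2 hg
  have : Epi h := SimplexCategory.epi_iff_surjective.2 hh
  let x' : X.nonDegenerate m := ⟨x, X.mem_nonDegenerate_of_not_isDegenerate hx⟩
  let y' : X.nonDegenerate m' := ⟨y, X.mem_nonDegenerate_of_not_isDegenerate hy⟩
  -- `(g, x)` and `(h, y)` are two Eilenberg–Zilber decompositions of `X.map g.op x`,
  -- and such decompositions are unique.
  obtain rfl : m = m' := X.unique_nonDegenerate_dim _ g x' rfl h y' e
  exact ⟨rfl, heq_of_eq (congrArg Subtype.val (X.unique_nonDegenerate_simplex _ g x' rfl h y' e))⟩
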